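/- Let κ > 0, μ > 0, γ̄ > 0, and let f be the κ-μ probability density function with mean γ̄ and shape parameters κ, μ. Then for every s ∈ ℝ and every z ≥ 0, the lower incomplete MGF is given in closed form by ∫_0^z e^{s x} f(x) dx = (μ^μ (1+κ)^μ z^μ / (Γ(μ+1) γ̄^μ e^{κμ})) · exp( (s − μ(1+κ)/γ̄) z ) · Φ₃( 1, μ+1 ; (μ(1+κ)/γ̄ − s) z , μ²κ(1+κ) z / γ̄ ). -/

import Mathlib

open MeasureTheory Real

/-- Pochhammer symbol `(a)ₙ = a (a+1) ⋯ (a+n-1)`. -/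
noncomputable def poch (a : ℝ) (n : ℕ) : ℝ := ∏ j ∈ Finset.range n, (a + j)

/-- Humbert bivariate confluent hypergeometric function `Φ₃(b;c;x,y)`. -/
noncomputable def Phi3 (b c x y : ℝ) : ℝ :=
  ∑' m : ℕ, ∑' n : ℕ,
    poch b m / poch c (m + n) * x ^ m * y ^ n
      / ((Nat.factorial m : ℝ) * (Nat.factorial n : ℝ))

/-- Modified Bessel function of the first kind of (real) order `ν`:
`I_ν(y) = Σ_{k} (y/2)^{ν+2k} / (k! Γ(ν+k+1))`. -/
noncomputable def besselI (ν y : ℝ) : ℝ :=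
  ∑' k : ℕ, (y / 2) ^ (ν + 2 * (k : ℝ)) / ((Nat.factorial k : ℝ) * Real.Gamma (ν + k + 1))

/-- The κ-μ probability density function with mean `γ̄` and shape parameters
`κ > 0`, `μ > 0`. -/
noncomputable def kappaMuPDF (κ μ γbar : ℝ) (x : ℝ) : ℝ :=
  if x < 0 then 0 else
    μ * (1 + κ) ^ ((μ + 1) / 2) / (κ ^ ((μ - 1) / 2) * Real.exp (μ * κ) * γbar)
      * (x / γbar) ^ ((μ - 1) / 2) * Real.exp (-(μ * (1 + κ) * x) / γbar)
      * besselI (μ - 1) (2 * μ * Real.sqrt (κ * (1 + κ) * x / γbar))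

/-! Expanding the Bessel function, `e^{sx} f(x)` is a constant times `e^{-cx} x^{μ-1} ₀F₁(; μ; b x)`
with `c = μ(1+κ)/γ̄ - s` and `b = μ²κ(1+κ)/γ̄`. Writing `e^{-cx} = e^{-cz} e^{c(z-x)}` and expanding
`e^{c(z-x)}` as well turns the integrand into an absolutely convergent double series whose terms
are Beta integrals `∫₀ᶻ x^{a+k-1} (z-x)^m dx = z^{a+k+m} m! / (a+k)_{m+1}`; summed, they give
`z^a/a · Φ₃(1; a+1; cz, bz)`. -/

open scoped Nat

lemma poch_pos {a : ℝ} (ha : 0 < a) (n : ℕ) : 0 < poch a n :=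
  Finset.prod_pos fun j _ => by positivity

lemma poch_add (a : ℝ) (m n : ℕ) : poch a (m + n) = poch a m * poch (a + m) n := by
  simp only [poch, Finset.prod_range_add, Nat.cast_add, add_assoc]

lemma poch_succ_eq_mul (a : ℝ) (n : ℕ) : poch a (n + 1) = a * poch (a + 1) n := by
  rw [add_comm n 1, poch_add]
  simp [poch]

lemma poch_one (n : ℕ) : poch 1 n = n ! := by
  rw [poch, ← Finset.prod_range_add_one_eq_factorial]
  push_cast
  exact Finset.prod_congr rfl fun j _ => add_comm _ _

lemma factorial_le_poch {a : ℝ} (ha : 1 ≤ a) (n : ℕ) : (n ! : ℝ) ≤ poch a n := by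
  rw [← poch_one]
  exact Finset.prod_le_prod (fun j _ => by positivity) fun j _ => by gcongr

lemma min_one_le_poch {a : ℝ} (ha : 0 < a) : ∀ n : ℕ, min 1 a ≤ poch a n
  | 0 => by simp [poch]
  | n + 1 => by
    rw [poch_succ_eq_mul]
    have hfac : 1 ≤ poch (a + 1) n :=
      (Nat.one_le_cast.mpr n.factorial_pos).trans (factorial_le_poch (by linarith) n)
    nlinarith [min_le_right 1 a]

lemma Gamma_add_nat {a : ℝ} (ha : 0 < a) (n : ℕ) : Gamma (a + n) = Gamma a * poch a n := by
  induction n with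
  | zero => simp [poch]
  | succ n ih =>
    rw [Nat.cast_succ, ← add_assoc, Gamma_add_one (by positivity), ih, poch, poch,
      Finset.prod_range_succ]
    ring

lemma integral_rpow_mul_sub_pow {a z : ℝ} (ha : 0 < a) (hz : 0 < z) (n : ℕ) :
    ∫ x in (0:ℝ)..z, x ^ (a - 1) * (z - x) ^ n = z ^ (a + n) * n ! / poch a (n + 1) := by
  have h := Complex.betaIntegral_scaled a (n + 1) hz
  rw [Complex.betaIntegral_eval_nat_add_one_right (by simpa using ha),
    show (a : ℂ) + (n + 1) - 1 = ((a + n : ℝ) : ℂ) by push_cast; ring, add_sub_cancel_right,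
    ← Complex.ofReal_cpow hz.le] at h
  apply Complex.ofReal_injective
  push_cast [poch, ← intervalIntegral.integral_ofReal, mul_div_assoc, ← h]
  refine intervalIntegral.integral_congr fun x hx => ?_
  rw [Set.uIcc_of_le hz.le] at hx
  simp [Complex.ofReal_cpow hx.1]

/-- The confluent hypergeometric limit function `₀F₁(; a; y) = Σₖ yᵏ / (k! (a)ₖ)`. -/
noncomputable def hyp0F1 (a y : ℝ) : ℝ := ∑' k : ℕ, y ^ k / (k ! * poch a k)

lemma summable_norm_hyp0F1_term {a : ℝ} (ha : 0 < a) (y : ℝ) :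
    Summable fun k : ℕ => ‖y ^ k / (k ! * poch a k)‖ := by
  refine .of_nonneg_of_le (fun _ => norm_nonneg _) (fun k => ?_)
    ((Real.summable_pow_div_factorial |y|).mul_left (min 1 a)⁻¹)
  have hmin : 0 < min 1 a := lt_min one_pos ha
  rw [norm_div, norm_pow, Real.norm_eq_abs, norm_of_nonneg (by positivity [poch_pos ha k]),
    inv_mul_eq_div, div_div]
  gcongr
  exact min_one_le_poch ha k

lemma besselI_two_mul_sqrt {ν w : ℝ} (hν : 0 < ν + 1) (hw : 0 < w) :
    besselI ν (2 * √w) = w ^ (ν / 2) / Gamma (ν + 1) * hyp0F1 (ν + 1) w := by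
  rw [besselI, hyp0F1, ← tsum_mul_left]
  congr 1 with k
  rw [mul_div_cancel_left₀ _ two_ne_zero, sqrt_eq_rpow, ← rpow_mul hw.le,
    show 1 / 2 * (ν + 2 * k) = ν / 2 + k by ring, rpow_add hw, rpow_natCast,
    show ν + k + 1 = ν + 1 + k by ring, Gamma_add_nat hν]
  field_simp

noncomputable def phi3Term (b c x y : ℝ) (m n : ℕ) : ℝ :=
  poch b m / poch c (m + n) * x ^ m * y ^ n / (m ! * n !)

lemma summable_phi3Term_one {c : ℝ} (hc : 1 ≤ c) (x y : ℝ) :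
    Summable fun p : ℕ × ℕ => phi3Term 1 c x y p.1 p.2 := by
  have hexp (t : ℝ) : Summable fun n : ℕ => ‖|t| ^ n / (n ! : ℝ)‖ :=
    (summable_norm_iff).mpr (Real.summable_pow_div_factorial |t|)
  refine .of_norm_bounded (summable_mul_of_summable_norm (hexp x) (hexp y)) fun ⟨m, n⟩ => ?_
  have hpoch : (m ! : ℝ) ≤ poch c (m + n) :=
    (Nat.cast_le.mpr (Nat.factorial_le (Nat.le_add_right m n))).trans (factorial_le_poch hc _)
  have := poch_pos (one_pos.trans_le hc) (m + n)
  simp only [phi3Term, poch_one, norm_div, norm_mul, norm_pow, Real.norm_eq_abs,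
    Nat.abs_cast, abs_of_pos this]
  rw [show (m ! : ℝ) / poch c (m + n) * |x| ^ m * |y| ^ n / (m ! * n !)
      = m ! / poch c (m + n) * (|x| ^ m / m ! * (|y| ^ n / n !)) by ring]
  exact mul_le_of_le_one_left (by positivity) ((div_le_one this).mpr hpoch)

lemma Phi3_one_eq_tsum {c : ℝ} (hc : 1 ≤ c) (x y : ℝ) :
    Phi3 1 c x y = ∑' p : ℕ × ℕ, phi3Term 1 c x y p.1 p.2 :=
  ((summable_phi3Term_one hc x y).tsum_prod).symm

section IncompleteLaplace

variable {a z : ℝ}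

/-- The `(m, k)` term of `e^{c (z - x)} x^{a - 1} ₀F₁(; a; b x)` as a double power series. -/
noncomputable def expHyp0F1Term (a z b c : ℝ) (p : ℕ × ℕ) (x : ℝ) : ℝ :=
  c ^ p.1 / p.1 ! * (b ^ p.2 / (p.2 ! * poch a p.2)) * (x ^ (a + p.2 - 1) * (z - x) ^ p.1)

lemma tsum_expHyp0F1Term (ha : 0 < a) (b c : ℝ) {x : ℝ} (hx : 0 < x) :
    ∑' p, expHyp0F1Term a z b c p x = exp (c * (z - x)) * x ^ (a - 1) * hyp0F1 a (b * x) := by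
  have hexp : exp (c * (z - x)) = ∑' m : ℕ, (c * (z - x)) ^ m / m ! := by
    rw [exp_eq_exp_ℝ, (NormedSpace.expSeries_div_hasSum_exp _).tsum_eq]
  have hsum : Summable fun k : ℕ => ‖x ^ (a - 1) * ((b * x) ^ k / (k ! * poch a k))‖ := by
    simpa only [norm_mul] using (summable_norm_hyp0F1_term ha (b * x)).mul_left ‖x ^ (a - 1)‖
  have hsum_exp : Summable fun m : ℕ => ‖(c * (z - x)) ^ m / (m ! : ℝ)‖ :=
    summable_norm_iff.mpr (Real.summable_pow_div_factorial _)
  rw [hexp, mul_assoc, hyp0F1, ← tsum_mul_left, tsum_mul_tsum_of_summable_norm hsum_exp hsum]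
  congr 1 with ⟨m, k⟩
  rw [expHyp0F1Term, add_sub_right_comm, rpow_add hx, rpow_natCast, mul_pow, mul_pow]
  ring

lemma integral_expHyp0F1Term (ha : 0 < a) (hz : 0 < z) (b c : ℝ) (p : ℕ × ℕ) :
    ∫ x in (0:ℝ)..z, expHyp0F1Term a z b c p x
      = z ^ a / a * phi3Term 1 (a + 1) (c * z) (b * z) p.1 p.2 := by
  obtain ⟨m, k⟩ := p
  have hpoch : poch a k * poch (a + k) (m + 1) = a * poch (a + 1) (m + k) := by
    rw [← poch_add, show k + (m + 1) = (m + k) + 1 by ring, poch_succ_eq_mul]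
  simp only [expHyp0F1Term, phi3Term, poch_one]
  rw [intervalIntegral.integral_const_mul, integral_rpow_mul_sub_pow (by positivity) hz,
    rpow_add hz, rpow_add hz, rpow_natCast, rpow_natCast]
  have := poch_pos ha k
  have := poch_pos (a := a + k) (by positivity) (m + 1)
  have := poch_pos (a := a + 1) (by positivity) (m + k)
  field_simp
  linear_combination (-(c ^ m * b ^ k * z ^ m * z ^ k)) * hpoch

lemma norm_expHyp0F1Term (ha : 0 < a) (b c : ℝ) (p : ℕ × ℕ) {x : ℝ} (hx : x ∈ Set.Icc 0 z) :
    ‖expHyp0F1Term a z b c p x‖ = expHyp0F1Term a z |b| |c| p x := by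
  have hpoch := poch_pos ha p.2
  have hzx : 0 ≤ z - x := sub_nonneg.mpr hx.2
  simp only [expHyp0F1Term, norm_mul, norm_div, norm_pow, Real.norm_eq_abs, Nat.abs_cast,
    abs_of_pos hpoch, abs_of_nonneg (rpow_nonneg hx.1 _), abs_of_nonneg hzx]

lemma intervalIntegrable_expHyp0F1Term (ha : 0 < a) (b c : ℝ) (p : ℕ × ℕ) :
    IntervalIntegrable (expHyp0F1Term a z b c p) volume 0 z :=
  ((intervalIntegral.intervalIntegrable_rpow' (by linarith [(p.2.cast_nonneg : (0:ℝ) ≤ p.2)]))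
    |>.mul_continuousOn (by fun_prop)).const_mul _

theorem integral_exp_mul_sub_rpow_mul_hyp0F1 (ha : 0 < a) (hz : 0 < z) (b c : ℝ) :
    ∫ x in (0:ℝ)..z, exp (c * (z - x)) * x ^ (a - 1) * hyp0F1 a (b * x)
      = z ^ a / a * Phi3 1 (a + 1) (c * z) (b * z) := by
  have hint (p : ℕ × ℕ) : IntegrableOn (expHyp0F1Term a z b c p) (Set.Ioc 0 z) :=
    (intervalIntegrable_iff_integrableOn_Ioc_of_le hz.le).mp
      (intervalIntegrable_expHyp0F1Term ha b c p)
  have hsum : Summable fun p => ∫ x in Set.Ioc 0 z, ‖expHyp0F1Term a z b c p x‖ := by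
    refine ((summable_phi3Term_one (c := a + 1) (by linarith) (|c| * z) (|b| * z)).mul_left
      (z ^ a / a)).congr fun p => ?_
    rw [setIntegral_congr_fun measurableSet_Ioc
        fun x hx => norm_expHyp0F1Term ha b c p (Set.Ioc_subset_Icc_self hx),
      ← intervalIntegral.integral_of_le hz.le, integral_expHyp0F1Term ha hz]
  rw [intervalIntegral.integral_of_le hz.le, ← setIntegral_congr_fun measurableSet_Ioc
      fun x hx => tsum_expHyp0F1Term ha b c hx.1, ← integral_tsum_of_summable_integral_norm hint hsum,
    Phi3_one_eq_tsum (c := a + 1) (by linarith), ← tsum_mul_left]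
  congr 1 with p
  rw [← intervalIntegral.integral_of_le hz.le, integral_expHyp0F1Term ha hz]

theorem integral_exp_neg_mul_rpow_mul_hyp0F1 (ha : 0 < a) (hz : 0 < z) (b c : ℝ) :
    ∫ x in (0:ℝ)..z, exp (-(c * x)) * x ^ (a - 1) * hyp0F1 a (b * x)
      = z ^ a * exp (-(c * z)) / a * Phi3 1 (a + 1) (c * z) (b * z) := by
  calc ∫ x in (0:ℝ)..z, exp (-(c * x)) * x ^ (a - 1) * hyp0F1 a (b * x)
      = ∫ x in (0:ℝ)..z, exp (-(c * z)) * (exp (c * (z - x)) * x ^ (a - 1) * hyp0F1 a (b * x)) :=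
        intervalIntegral.integral_congr fun x _ => by
          rw [← mul_assoc, ← mul_assoc, ← exp_add]; ring_nf
    _ = _ := by
      rw [intervalIntegral.integral_const_mul, integral_exp_mul_sub_rpow_mul_hyp0F1 ha hz]
      ring

end IncompleteLaplace

section KappaMu

variable {κ μ γbar : ℝ}

lemma kappaMu_normalization (hκ : 0 < κ) (hμ : 0 < μ) (hγ : 0 < γbar) {x : ℝ} (hx : 0 < x) :
    μ * (1 + κ) ^ ((μ + 1) / 2) / (κ ^ ((μ - 1) / 2) * exp (μ * κ) * γbar)
      * (x / γbar) ^ ((μ - 1) / 2) * (μ ^ 2 * κ * (1 + κ) / γbar * x) ^ ((μ - 1) / 2)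
      = μ ^ μ * (1 + κ) ^ μ / (γbar ^ μ * exp (κ * μ)) * x ^ (μ - 1) := by
  have hκ' : 0 < 1 + κ := by linarith
  have hsq : (x / γbar) ^ ((μ - 1) / 2) * (μ ^ 2 * κ * (1 + κ) / γbar * x) ^ ((μ - 1) / 2)
      = (μ * x / γbar) ^ (μ - 1) * κ ^ ((μ - 1) / 2) * (1 + κ) ^ ((μ - 1) / 2) := by
    rw [← mul_rpow (by positivity) (by positivity),
      show x / γbar * (μ ^ 2 * κ * (1 + κ) / γbar * x) = (μ * x / γbar) ^ 2 * κ * (1 + κ) by ring,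
      mul_rpow (by positivity) hκ'.le, mul_rpow (by positivity) hκ.le, ← rpow_natCast,
      ← rpow_mul (by positivity), show ((2 : ℕ) : ℝ) * ((μ - 1) / 2) = μ - 1 by push_cast; ring]
  have hpow : (1 + κ) ^ ((μ + 1) / 2) * (1 + κ) ^ ((μ - 1) / 2) = (1 + κ) ^ μ := by
    rw [← rpow_add hκ']; ring_nf
  rw [mul_assoc _ (_ ^ _), hsq, div_rpow (by positivity) hγ.le, mul_rpow hμ.le hx.le,
    rpow_sub_one hμ.ne', rpow_sub_one hγ.ne', ← hpow, mul_comm κ μ]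
  have := rpow_pos_of_pos hκ ((μ - 1) / 2)
  have := rpow_pos_of_pos hγ μ
  field_simp

lemma kappaMuPDF_of_pos (hκ : 0 < κ) (hμ : 0 < μ) (hγ : 0 < γbar) {x : ℝ} (hx : 0 < x) :
    kappaMuPDF κ μ γbar x = μ ^ μ * (1 + κ) ^ μ / (γbar ^ μ * exp (κ * μ) * Gamma μ)
      * (exp (-(μ * (1 + κ) / γbar * x)) * x ^ (μ - 1)
        * hyp0F1 μ (μ ^ 2 * κ * (1 + κ) / γbar * x)) := by
  have hsqrt : 2 * μ * √(κ * (1 + κ) * x / γbar) = 2 * √(μ ^ 2 * κ * (1 + κ) / γbar * x) := by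
    rw [show μ ^ 2 * κ * (1 + κ) / γbar * x = μ ^ 2 * (κ * (1 + κ) * x / γbar) by ring,
      sqrt_mul (sq_nonneg μ), sqrt_sq hμ.le, mul_assoc]
  rw [kappaMuPDF, if_neg hx.not_gt, hsqrt, besselI_two_mul_sqrt (by linarith) (by positivity),
    sub_add_cancel, show -(μ * (1 + κ) * x) / γbar = -(μ * (1 + κ) / γbar * x) by ring]
  linear_combination (exp (-(μ * (1 + κ) / γbar * x)) * hyp0F1 μ (μ ^ 2 * κ * (1 + κ) / γbar * x)
    / Gamma μ) * kappaMu_normalization hκ hμ hγ hx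

end KappaMu

/-- closed form of the lower incomplete MGF of the κ-μ
distribution. -/
theorem lower_IMGF_kappaMu (κ μ γbar : ℝ)
    (hκ : 0 < κ) (hμ : 0 < μ) (hγ : 0 < γbar)
    (s z : ℝ) (hz : 0 ≤ z) :
    ∫ x in (0:ℝ)..z, Real.exp (s * x) * kappaMuPDF κ μ γbar x
      = μ ^ μ * (1 + κ) ^ μ * z ^ μ / (Real.Gamma (μ + 1) * γbar ^ μ * Real.exp (κ * μ))
          * Real.exp ((s - μ * (1 + κ) / γbar) * z)
          * Phi3 1 (μ + 1)
              ((μ * (1 + κ) / γbar - s) * z)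
              (μ ^ 2 * κ * (1 + κ) * z / γbar) := by
  rcases hz.eq_or_lt with rfl | hz
  · simp [zero_rpow hμ.ne']
  have hpdf : ∀ x ∈ Set.Ioc 0 z, exp (s * x) * kappaMuPDF κ μ γbar x
      = μ ^ μ * (1 + κ) ^ μ / (γbar ^ μ * exp (κ * μ) * Gamma μ)
        * (exp (-((μ * (1 + κ) / γbar - s) * x)) * x ^ (μ - 1)
          * hyp0F1 μ (μ ^ 2 * κ * (1 + κ) / γbar * x)) := fun x hx => by
    rw [kappaMuPDF_of_pos hκ hμ hγ hx.1, mul_left_comm, ← mul_assoc (exp _), ← mul_assoc (exp _),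
      ← exp_add]
    ring_nf
  rw [intervalIntegral.integral_of_le hz.le, setIntegral_congr_fun measurableSet_Ioc hpdf,
    integral_const_mul, ← intervalIntegral.integral_of_le hz.le,
    integral_exp_neg_mul_rpow_mul_hyp0F1 hμ hz, Gamma_add_one hμ.ne',
    show -((μ * (1 + κ) / γbar - s) * z) = (s - μ * (1 + κ) / γbar) * z by ring,
    show μ ^ 2 * κ * (1 + κ) / γbar * z = μ ^ 2 * κ * (1 + κ) * z / γbar by ring]
  field_simp
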